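/- For all 2×2 complex matrices a, b, c, d with trace zero, the following identity holds: Tr((a*b - b*a)*(c*d - d*c)) = 2·Tr(a*d)·Tr(b*c) - 2·Tr(a*c)·Tr(b*d). (This is the Lagrange-type identity between the Lie bracket and the trace form on sl₂ that underlies the recursion for the universal sl₂ weight system.) -/
import Mathlib


/-- The Lagrange-type identity for `sl₂(ℂ)`: for traceless `2 × 2` complex matrices
`a, b, c, d`, one has
`Tr([a,b] * [c,d]) = 2 Tr(a d) Tr(b c) - 2 Tr(a c) Tr(b d)`,
where `[x,y] = x*y - y*x`. -/
theorem sl2_lagrange_identity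
    (a b c d : Matrix (Fin 2) (Fin 2) ℂ)
    (ha : Matrix.trace a = 0) (hb : Matrix.trace b = 0)
    (hc : Matrix.trace c = 0) (hd : Matrix.trace d = 0) :
    Matrix.trace ((a * b - b * a) * (c * d - d * c)) =
      2 * Matrix.trace (a * d) * Matrix.trace (b * c)
        - 2 * Matrix.trace (a * c) * Matrix.trace (b * d) := by
  simp only [Matrix.trace_fin_two] at *
  have ha' : a 1 1 = -a 0 0 := by linear_combination ha
  have hb' : b 1 1 = -b 0 0 := by linear_combination hb
  have hc' : c 1 1 = -c 0 0 := by linear_combination hc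
  have hd' : d 1 1 = -d 0 0 := by linear_combination hd
  simp only [Matrix.sub_apply, Matrix.mul_apply, Fin.sum_univ_two, ha', hb', hc', hd']
  ring
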